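/- arXiv:1608.02472 — 2 statements merged into one kernel-verified Lean document; each statement's English description precedes it below -/
import Mathlib

section
/- For integers p, q with q > 0 and gcd(p,q) = 1, the Dedekind sum satisfies the reciprocity law s(p,q) + s(q,p) = (1/12)(p/q + q/p + 1/(pq)) - 1/4, where s(p,q) = \sum_{k=0}^{q-1} ((k/q))((pk/q)) and ((x)) denotes the sawtooth function. -/
/-!
Write `m_k = ⌊pk/q⌋` and `r_k = pk mod q`, so `pk = q m_k + r_k`. For `0 < k < q` both sawtooth
values are fractional parts minus `1/2`, and `k ↦ r_k` permutes `range q`; hence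
`s(p,q) = p(q-1)(2q-1)/(6q) - (∑ k m_k)/q - (q-1)/4`, and reciprocity becomes
`12 (p ∑ k ⌊pk/q⌋ + q ∑ j ⌊qj/p⌋) = (p-1)(q-1)(8pq-p-q-1)`. The same permutation evaluates `∑ m_k`
and, through `∑ r_k² = ∑ k²`, gives `∑ m_k²` in terms of `∑ k m_k`. The link between the two
weighted floor sums comes from the lattice points of `[0,p) × [0,q)`: by coprimality only the origin
lies on the diagonal `qj = pk`, and summing `j` over the two triangles gives
`∑ m_k (m_k + 1)/2 + ∑ j ⌊qj/p⌋ + ∑ j = q ∑ j`.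
-/

/-- The sawtooth function `((x))`: `x - ⌊x⌋ - 1/2` for non-integer `x`, and `0` for integer `x`. -/
noncomputable def sawtooth (x : ℝ) : ℝ :=
  if Int.fract x = 0 then 0 else Int.fract x - 1/2

/-- The classical Dedekind sum `s(p,q) = ∑_{k=0}^{q-1} ((k/q)) ((pk/q))`. -/
noncomputable def dedekindSum (p q : ℕ) : ℝ :=
  ∑ k ∈ Finset.range q, sawtooth (k / q) * sawtooth (p * k / q)

open Finset

section GaussSums

variable {R : Type*} [CommRing R]

theorem sum_range_natCast_mul_two (n : ℕ) : (∑ i ∈ range n, (i : R)) * 2 = n * (n - 1) := by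
  induction n with
  | zero => simp
  | succ n ih => rw [sum_range_succ, add_mul, ih]; push_cast; ring

theorem sum_range_natCast_sq_mul_six (n : ℕ) :
    (∑ i ∈ range n, (i : R) ^ 2) * 6 = n * (n - 1) * (2 * n - 1) := by
  induction n with
  | zero => simp
  | succ n ih => rw [sum_range_succ, add_mul, ih]; push_cast; ring

end GaussSums

theorem natCast_mod_eq_sub {R : Type*} [Ring R] (n q : ℕ) :
    ((n % q : ℕ) : R) = n - q * (n / q : ℕ) :=
  eq_sub_of_add_eq (by rw [← Nat.cast_mul, ← Nat.cast_add, Nat.mod_add_div])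

theorem sum_range_mul_mod {M : Type*} [AddCommMonoid M] {p q : ℕ} (hpq : p.Coprime q)
    (f : ℕ → M) : ∑ k ∈ range q, f (p * k % q) = ∑ k ∈ range q, f k := by
  have hmaps : Set.MapsTo (fun k => p * k % q) (range q : Set ℕ) (range q) := fun k hk =>
    mem_range.2 (Nat.mod_lt _ (Nat.zero_lt_of_lt (mem_range.1 hk)))
  have hinj : Set.InjOn (fun k => p * k % q) (range q : Set ℕ) := fun a ha b hb hab =>
    (Nat.ModEq.cancel_left_of_coprime hpq.symm hab).eq_of_lt_of_lt (mem_range.1 ha) (mem_range.1 hb)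
  exact sum_nbij _ hmaps hinj (surjOn_of_injOn_of_card_le _ hmaps hinj le_rfl) fun _ _ => rfl

theorem sawtooth_natCast_div {n q : ℕ} (hq : 0 < q) (hn : ¬ q ∣ n) :
    sawtooth ((n : ℝ) / q) = ((n % q : ℕ) : ℝ) / q - 1 / 2 := by
  have hfract : ((n % q : ℕ) : ℝ) / q ≠ 0 :=
    div_ne_zero (by exact_mod_cast mt Nat.dvd_of_mod_eq_zero hn) (by positivity)
  rw [sawtooth, Int.fract_div_natCast_eq_div_natCast_mod, if_neg hfract]

theorem dedekindSum_eq_sum_mod {p q : ℕ} (hq : 0 < q) (hpq : p.Coprime q) :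
    dedekindSum p q =
      ∑ k ∈ range q, ((k : ℝ) / q - 1 / 2) * (((p * k % q : ℕ) : ℝ) / q - 1 / 2) - 1 / 4 := by
  -- the `k = 0` term on the right is `1/4`, where the sawtooth product vanishes
  rw [dedekindSum, range_eq_Ico, sum_eq_sum_Ico_succ_bot hq, sum_eq_sum_Ico_succ_bot hq]
  have hterm : ∀ k ∈ Ico 1 q, sawtooth (k / q) * sawtooth (p * k / q) =
      ((k : ℝ) / q - 1 / 2) * (((p * k % q : ℕ) : ℝ) / q - 1 / 2) := by
    intro k hk
    obtain ⟨hk0, hkq⟩ := mem_Ico.1 hk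
    have hndvd : ¬ q ∣ k := Nat.not_dvd_of_pos_of_lt hk0 hkq
    rw [← Nat.cast_mul, sawtooth_natCast_div hq hndvd,
      sawtooth_natCast_div hq fun h => hndvd (hpq.symm.dvd_of_dvd_mul_left h), Nat.mod_eq_of_lt hkq]
  rw [sum_congr rfl hterm]
  norm_num [sawtooth]

def weightedFloorSum (p q : ℕ) : ℕ := ∑ k ∈ range q, k * (p * k / q)

theorem dedekindSum_eq_weightedFloorSum {p q : ℕ} (hq : 0 < q) (hpq : p.Coprime q) :
    dedekindSum p q =
      p * (q - 1) * (2 * q - 1) / (6 * q) - weightedFloorSum p q / q - (q - 1) / 4 := by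
  have hres : ∑ k ∈ range q, ((p * k % q : ℕ) : ℝ) = ∑ k ∈ range q, (k : ℝ) :=
    sum_range_mul_mod hpq _
  have hmoment : ∑ k ∈ range q, (k : ℝ) * (p * k % q : ℕ) =
      p * ∑ k ∈ range q, (k : ℝ) ^ 2 - q * weightedFloorSum p q := by
    simp only [weightedFloorSum, natCast_mod_eq_sub, Nat.cast_sum, Nat.cast_mul, mul_sum,
      ← sum_sub_distrib]
    exact sum_congr rfl fun k _ => by ring
  have hexpand : ∀ k ∈ range q, ((k : ℝ) / q - 1 / 2) * (((p * k % q : ℕ) : ℝ) / q - 1 / 2) =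
      (k : ℝ) * (p * k % q : ℕ) / q ^ 2 - ((k : ℝ) + (p * k % q : ℕ)) / (2 * q) + 1 / 4 := by
    intro k _
    field_simp
    ring
  rw [dedekindSum_eq_sum_mod hq hpq, sum_congr rfl hexpand, sum_add_distrib, sum_sub_distrib,
    ← sum_div, ← sum_div, sum_add_distrib, hres, hmoment, sum_const, card_range, nsmul_eq_mul,
    eq_div_of_mul_eq two_ne_zero (sum_range_natCast_mul_two (R := ℝ) q),
    eq_div_of_mul_eq (by norm_num) (sum_range_natCast_sq_mul_six (R := ℝ) q)]
  field_simp
  ring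

theorem filter_range_mul_le_mul {p q k : ℕ} (hp : 0 < p) (hk : k < q) :
    {j ∈ range p | q * j ≤ p * k} = range (p * k / q + 1) := by
  have hq : 0 < q := Nat.zero_lt_of_lt hk
  have hlt : p * k / q < p :=
    Nat.div_lt_of_lt_mul (by rw [mul_comm q]; exact Nat.mul_lt_mul_of_pos_left hk hp)
  ext j
  simp only [mem_filter, mem_range, Nat.lt_succ_iff, Nat.le_div_iff_mul_le hq, mul_comm q j]
  exact ⟨And.right, fun h => ⟨((Nat.le_div_iff_mul_le hq).2 h).trans_lt hlt, h⟩⟩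

theorem mul_ne_mul_of_coprime {p q j k : ℕ} (hpq : p.Coprime q) (hj0 : 0 < j) (hjp : j < p) :
    p * k ≠ q * j := fun h =>
  Nat.not_dvd_of_pos_of_lt hj0 hjp (hpq.dvd_of_dvd_mul_left (h ▸ dvd_mul_right p k))

theorem sum_sum_range_mul_div_add_weightedFloorSum {p q : ℕ} (hp : 0 < p) (hq : 0 < q)
    (hpq : p.Coprime q) :
    ∑ k ∈ range q, ∑ j ∈ range (p * k / q + 1), j + weightedFloorSum q p + ∑ j ∈ range p, j =
      q * ∑ j ∈ range p, j := by
  have hsplit : ∀ k ∈ range q, ∑ j ∈ range p, j =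
      ∑ j ∈ range (p * k / q + 1), j + ∑ j ∈ range p with p * k < q * j, j := by
    intro k hk
    simp_rw [← filter_range_mul_le_mul hp (mem_range.1 hk), ← not_le]
    exact (sum_filter_add_sum_filter_not _ _ _).symm
  have hcount : ∀ j ∈ range p, #{k ∈ range q | p * k < q * j} • j = j * (q * j / p) + j := by
    intro j hj
    rcases j.eq_zero_or_pos with rfl | hj0
    · simp
    have hfilter : {k ∈ range q | p * k < q * j} = range (q * j / p + 1) := by
      rw [← filter_range_mul_le_mul hq (mem_range.1 hj)]
      refine filter_congr fun k _ => ?_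
      rw [lt_iff_le_and_ne, and_iff_left (mul_ne_mul_of_coprime hpq hj0 (mem_range.1 hj))]
    rw [hfilter, card_range, smul_eq_mul]
    ring
  calc _ = ∑ k ∈ range q, ∑ j ∈ range (p * k / q + 1), j +
          ∑ j ∈ range p, #{k ∈ range q | p * k < q * j} • j := by
        rw [add_assoc, sum_congr rfl hcount, sum_add_distrib, weightedFloorSum]
    _ = ∑ k ∈ range q, ∑ j ∈ range (p * k / q + 1), j +
          ∑ k ∈ range q, ∑ j ∈ range p with p * k < q * j, j := by
        simp_rw [← sum_const]
        exact congrArg _ (sum_comm' fun k j => by simp only [mem_filter, mem_range]; tauto).symm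
    _ = q * ∑ j ∈ range p, j := by
        rw [← sum_add_distrib, ← sum_congr rfl hsplit, sum_const, card_range, smul_eq_mul]

section ResidueSums

variable {R : Type*} [CommRing R] {p q : ℕ}

theorem mul_sum_range_mul_div (hpq : p.Coprime q) :
    (q : R) * ∑ k ∈ range q, ((p * k / q : ℕ) : R) = (p - 1) * ∑ k ∈ range q, (k : R) := by
  have h := sum_range_mul_mod hpq (fun n => (n : R))
  simp only [natCast_mod_eq_sub, Nat.cast_mul, sum_sub_distrib, ← mul_sum] at h
  linear_combination -h

theorem sq_mul_sum_range_mul_div_sq (hpq : p.Coprime q) :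
    (q : R) ^ 2 * ∑ k ∈ range q, ((p * k / q : ℕ) : R) ^ 2 =
      2 * p * q * weightedFloorSum p q - (p ^ 2 - 1) * ∑ k ∈ range q, (k : R) ^ 2 := by
  have h := sum_range_mul_mod hpq (fun n => (n : R) ^ 2)
  have hexpand : ∑ k ∈ range q, ((p * k : ℕ) - q * ((p * k / q : ℕ) : R)) ^ 2 =
      p ^ 2 * ∑ k ∈ range q, (k : R) ^ 2 - 2 * p * q * weightedFloorSum p q +
        q ^ 2 * ∑ k ∈ range q, ((p * k / q : ℕ) : R) ^ 2 := by
    simp only [weightedFloorSum, Nat.cast_sum, Nat.cast_mul, mul_sum, ← sum_sub_distrib,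
      ← sum_add_distrib]
    exact sum_congr rfl fun k _ => by ring
  simp only [natCast_mod_eq_sub] at h
  linear_combination h - hexpand

end ResidueSums

theorem weightedFloorSum_reciprocity {p q : ℕ} (hp : 0 < p) (hq : 0 < q) (hpq : p.Coprime q) :
    12 * (p * (weightedFloorSum p q : ℝ) + q * weightedFloorSum q p) =
      (p - 1) * (q - 1) * (8 * p * q - p - q - 1) := by
  have hlattice := sum_sum_range_mul_div_add_weightedFloorSum hp hq hpq
  rify at hlattice
  have htriangle : (∑ k ∈ range q, ∑ j ∈ range (p * k / q + 1), (j : ℝ)) * 2 =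
      ∑ k ∈ range q, ((p * k / q : ℕ) : ℝ) ^ 2 + ∑ k ∈ range q, ((p * k / q : ℕ) : ℝ) := by
    rw [sum_mul, ← sum_add_distrib]
    exact sum_congr rfl fun k _ => by rw [sum_range_natCast_mul_two]; push_cast; ring
  have hq0 : (q : ℝ) ≠ 0 := by positivity
  apply mul_left_cancel₀ hq0
  -- eliminate `∑ m_k²` and `∑ m_k`, then insert the power sums
  linear_combination 6 * (q : ℝ) ^ 2 * (2 * hlattice - htriangle)
    - 6 * sq_mul_sum_range_mul_div_sq (R := ℝ) hpq - 6 * (q : ℝ) * mul_sum_range_mul_div (R := ℝ) hpq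
    + ((p : ℝ) ^ 2 - 1) * sum_range_natCast_sq_mul_six (R := ℝ) q
    - 3 * (q : ℝ) * (p - 1) * sum_range_natCast_mul_two (R := ℝ) q
    + 6 * (q : ℝ) ^ 2 * (q - 1) * sum_range_natCast_mul_two (R := ℝ) p

/-- Dedekind reciprocity. -/
theorem dedekind_reciprocity (p q : ℕ) (hp : 0 < p) (hq : 0 < q)
    (hpq : Nat.Coprime p q) :
    dedekindSum p q + dedekindSum q p =
      (1/12) * ((p : ℝ)/q + (q : ℝ)/p + 1/((p : ℝ)*q)) - 1/4 := by
  rw [dedekindSum_eq_weightedFloorSum hq hpq, dedekindSum_eq_weightedFloorSum hp hpq.symm]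
  field_simp
  linear_combination -24 * weightedFloorSum_reciprocity hp hq hpq
end

section
/- Let p, q, r, s be integers with ps - qr = 1 and q \neq 0, and let N \geq 1. Let e_{N,k} be defined by (z^2 + (p+s)z + 1)^{N-1} = \sum_{k=0}^{2N-2} e_{N,k} z^k. Then \sum_{k=0}^{2N-2} (-1)^k \frac{e_{N,k}}{k+1}(p+s)^{k+1} + \sum_{k=0}^{2N-2} (-1)^{k+1} \frac{e_{N,k}}{(k+1)(2N-1-k)}\left((k+1)p^{2N-k-1} + (2N-k-1)s^{k+1}\right) = 0. -/
open intervalIntegral Finset in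
/-- Cancellation of the fractional parts of generalized Dedekind sums in Siegel's formula
(Lemma 6.2): an identity among the coefficients `e_{N,k}` of `(z² + (p+s)z + 1)^{N-1}`. -/
theorem siegel_fractional_cancellation (p q r s : ℤ) (hdet : p * s - q * r = 1) (hq : q ≠ 0)
    (N : ℕ) (hN : 1 ≤ N) (e : ℕ → ℝ)
    (he : ∀ z : ℝ, (z^2 + ((p : ℝ) + s) * z + 1)^(N - 1) =
      ∑ k ∈ Finset.range (2 * N - 1), e k * z^k) :
    (∑ k ∈ Finset.range (2 * N - 1),
        (-1 : ℝ)^k * e k / (k + 1) * ((p : ℝ) + s)^(k + 1)) +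
      (∑ k ∈ Finset.range (2 * N - 1),
        (-1 : ℝ)^(k + 1) * e k / ((k + 1) * (2 * N - 1 - k : ℝ)) *
          ((k + 1) * (p : ℝ)^(2 * N - k - 1) + (2 * N - 1 - k : ℝ) * (s : ℝ)^(k + 1))) = 0 := by
  set c : ℝ := (p : ℝ) + s with hc
  -- the reversed polynomial expansion
  have hg : ∀ t : ℝ, (t^2 - c*t + 1)^(N-1)
      = ∑ k ∈ Finset.range (2*N-1), (-1:ℝ)^k * e k * t^k := by
    intro t
    have h := he (-t)
    have h2 : ((-t)^2 + c*(-t) + 1) = t^2 - c*t + 1 := by ring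
    rw [h2] at h
    rw [h]
    exact Finset.sum_congr rfl fun k _ => by rw [neg_pow]; ring
  -- the "palindrome" expansion, via density of ℝ \ {0}
  have hh : ∀ t : ℝ, (t^2 - c*t + 1)^(N-1)
      = ∑ k ∈ Finset.range (2*N-1), (-1:ℝ)^k * e k * t^(2*N-2-k) := by
    have hcont1 : Continuous fun t : ℝ => (t^2 - c*t + 1)^(N-1) := by fun_prop
    have hcont2 : Continuous fun t : ℝ =>
        ∑ k ∈ Finset.range (2*N-1), (-1:ℝ)^k * e k * t^(2*N-2-k) := by
      apply continuous_finset_sum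
      intro k _
      fun_prop
    have heq : Set.EqOn (fun t : ℝ => (t^2 - c*t + 1)^(N-1))
        (fun t : ℝ => ∑ k ∈ Finset.range (2*N-1), (-1:ℝ)^k * e k * t^(2*N-2-k))
        ({0}ᶜ : Set ℝ) := by
      intro t ht
      simp only [Set.mem_compl_iff, Set.mem_singleton_iff] at ht
      have h := he (-t⁻¹)
      have hmul := congrArg (fun y : ℝ => (t^2)^(N-1) * y) h
      have hL : (t^2)^(N-1) * ((-t⁻¹)^2 + c*(-t⁻¹) + 1)^(N-1) = (t^2 - c*t + 1)^(N-1) := by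
        rw [← mul_pow]
        congr 1
        field_simp
        ring
      rw [hL, Finset.mul_sum] at hmul
      simp only
      rw [hmul]
      refine Finset.sum_congr rfl fun k hk => ?_
      have hk' : k ≤ 2*N-2 := by
        have := Finset.mem_range.mp hk
        omega
      have hpow : t^(2*N-2-k) * t^k = t^(2*N-2) := by
        rw [← pow_add]
        congr 1
        omega
      have ht2 : (t^2)^(N-1) = t^(2*N-2) := by
        rw [← pow_mul]
        congr 1
        omega
      rw [ht2]
      have : (-t⁻¹)^k = (-1)^k * (t^k)⁻¹ := by rw [neg_pow, inv_pow]
      rw [this]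
      field_simp
      rw [← hpow]
      ring
    exact fun t => congrFun (hcont1.ext_on (dense_compl_singleton (0:ℝ)) hcont2 heq) t
  have int_g : ∀ a b : ℝ, IntervalIntegrable
      (fun t : ℝ => (t^2 - c*t + 1)^(N-1)) MeasureTheory.volume a b := by
    intro a b
    exact (by fun_prop : Continuous fun t : ℝ => (t^2 - c*t + 1)^(N-1)).intervalIntegrable a b
  -- antiderivative formula (standard expansion)
  have I1 : ∀ x : ℝ, (∫ t in (0:ℝ)..x, (t^2 - c*t + 1)^(N-1))
      = ∑ k ∈ Finset.range (2*N-1), (-1:ℝ)^k * e k * x^(k+1)/(k+1) := by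
    intro x
    rw [intervalIntegral.integral_congr (fun t _ => hg t)]
    rw [intervalIntegral.integral_finset_sum]
    · refine Finset.sum_congr rfl fun k _ => ?_
      rw [intervalIntegral.integral_const_mul, integral_pow]
      simp
      ring
    · intro k _
      exact (by fun_prop : Continuous fun t : ℝ => (-1:ℝ)^k * e k * t^k).intervalIntegrable 0 x
  -- antiderivative formula (palindrome expansion)
  have I2 : ∀ x : ℝ, (∫ t in (0:ℝ)..x, (t^2 - c*t + 1)^(N-1))
      = ∑ k ∈ Finset.range (2*N-1), (-1:ℝ)^k * e k * x^(2*N-k-1)/(2*(N:ℝ) - 1 - k) := by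
    intro x
    rw [intervalIntegral.integral_congr (fun t _ => hh t)]
    rw [intervalIntegral.integral_finset_sum]
    · refine Finset.sum_congr rfl fun k hk => ?_
      have hk' : k < 2*N-1 := Finset.mem_range.mp hk
      rw [intervalIntegral.integral_const_mul, integral_pow]
      have h1 : 2*N-2-k+1 = 2*N-k-1 := by omega
      have h2 : ((2*N-2-k : ℕ) : ℝ) + 1 = 2*(N:ℝ) - 1 - k := by
        have : (2*N-2-k : ℕ) = 2*N-2-k := rfl
        push_cast [Nat.cast_sub (by omega : k ≤ 2*N-2), Nat.cast_sub (by omega : 2 ≤ 2*N)]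
        ring
      rw [h1, h2, zero_pow (by omega : 2*N-k-1 ≠ 0)]
      ring
    · intro k _
      exact (by fun_prop :
        Continuous fun t : ℝ => (-1:ℝ)^k * e k * t^(2*N-2-k)).intervalIntegrable 0 x
  -- additivity: ∫₀^{p+s} = ∫₀^p + ∫₀^s
  have I3 : (∫ t in (0:ℝ)..c, (t^2 - c*t + 1)^(N-1))
      = (∫ t in (0:ℝ)..(p:ℝ), (t^2 - c*t + 1)^(N-1))
        + (∫ t in (0:ℝ)..(s:ℝ), (t^2 - c*t + 1)^(N-1)) := by
    rw [← intervalIntegral.integral_add_adjacent_intervals (int_g 0 p) (int_g p c)]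
    congr 1
    have h1 : (∫ t in (p:ℝ)..c, (t^2 - c*t + 1)^(N-1))
        = ∫ t in (0:ℝ)..(s:ℝ), (((p:ℝ)+t)^2 - c*((p:ℝ)+t) + 1)^(N-1) := by
      rw [intervalIntegral.integral_comp_add_left (fun t : ℝ => (t^2 - c*t + 1)^(N-1)) (p:ℝ)]
      norm_num [hc]
    rw [h1]
    have h2 : ∀ t : ℝ, (((p:ℝ)+t)^2 - c*((p:ℝ)+t) + 1)^(N-1)
        = (((s:ℝ)-t)^2 - c*((s:ℝ)-t) + 1)^(N-1) := by
      intro t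
      congr 1
      rw [hc]
      ring
    rw [intervalIntegral.integral_congr (fun t _ => h2 t)]
    rw [intervalIntegral.integral_comp_sub_left (fun t : ℝ => (t^2 - c*t + 1)^(N-1)) (s:ℝ)]
    norm_num
  -- now assemble
  have hS1 : (∑ k ∈ Finset.range (2 * N - 1),
      (-1 : ℝ)^k * e k / (k + 1) * ((p : ℝ) + s)^(k + 1))
      = ∫ t in (0:ℝ)..c, (t^2 - c*t + 1)^(N-1) := by
    rw [I1 c]
    exact Finset.sum_congr rfl fun k _ => by rw [hc]; ring
  have hS2 : (∑ k ∈ Finset.range (2 * N - 1),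
        (-1 : ℝ)^(k + 1) * e k / ((k + 1) * (2 * N - 1 - k : ℝ)) *
          ((k + 1) * (p : ℝ)^(2 * N - k - 1) + (2 * N - 1 - k : ℝ) * (s : ℝ)^(k + 1)))
      = -(∫ t in (0:ℝ)..(p:ℝ), (t^2 - c*t + 1)^(N-1))
        - (∫ t in (0:ℝ)..(s:ℝ), (t^2 - c*t + 1)^(N-1)) := by
    rw [I2 (p:ℝ), I1 (s:ℝ), ← Finset.sum_neg_distrib, ← Finset.sum_sub_distrib]
    refine Finset.sum_congr rfl fun k hk => ?_
    have hk' : k < 2*N-1 := Finset.mem_range.mp hk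
    have hD : (0:ℝ) < 2*(N:ℝ) - 1 - k := by
      have : ((k:ℝ)) + 1 ≤ 2*(N:ℝ) - 1 := by
        have : (k + 1 : ℕ) ≤ 2*N - 1 := by omega
        have h := (Nat.cast_le (α := ℝ)).mpr this
        push_cast [Nat.cast_sub (by omega : 1 ≤ 2*N)] at h
        linarith
      linarith
    have hD' : (2*(N:ℝ) - 1 - k) ≠ 0 := ne_of_gt hD
    have hk1 : ((k:ℝ) + 1) ≠ 0 := by positivity
    field_simp
    ring
  rw [hS1, hS2, I3]
  ring
end
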